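/- Let 0 < q1 < q2 < 1, c > 0, ω > 0, b = ρ1ω^{q2} − cρ2ω^{−q1} and a* = cρ1ω^{−q2} − ρ2ω^{q1}, where ρ1 = sin(q1π/2)/sin((q2−q1)π/2), ρ2 = sin(q2π/2)/sin((q2−q1)π/2). Let P(ω) = (q1+q2)(iω)^{q1+q2−1} + a*·q2·(iω)^{q2−1} + b·q1·(iω)^{q1−1} (principal branches). Then Re(i^{q2}·conj(P(ω))) = ω^{q1−1}·sin((q2−q1)π/2)·(q2ρ1ω^{q2} + c·q1ρ2ω^{−q1}) > 0. -/

import Mathlib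

/-!
With principal branches, `(iω)^s = ω^s e^{isπ/2}` and `i^{q₂} = e^{iq₂π/2}`, so each term of
`i^{q₂} · conj P(ω)` has real part `coefficient · ω^s · cos((q₂ - s)π/2)`. The `a*`-term has
`s = q₂ - 1` and drops out since `cos(π/2) = 0`; the other two cosines are `sin(q₁π/2) = ρ₁ sin((q₂-q₁)π/2)`
and `-sin((q₂-q₁)π/2)`, and substituting `b` leaves a sum of positive terms.
-/

open Real Complex

open scoped ComplexConjugate

namespace Complex

lemma mul_ofReal_cpow {r : ℝ} (hr : 0 < r) {x : ℂ} (hx : x ≠ 0) (s : ℂ) :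
    (x * r) ^ s = x ^ s * (r : ℂ) ^ s := by
  rw [cpow_def_of_ne_zero (mul_ne_zero hx (ofReal_ne_zero.2 hr.ne')), log_mul_ofReal r hr x hx,
    cpow_def_of_ne_zero hx, cpow_def_of_ne_zero (ofReal_ne_zero.2 hr.ne'), ← exp_add,
    ofReal_log hr.le]
  ring_nf

lemma I_cpow_ofReal (s : ℝ) : I ^ (s : ℂ) = exp (↑(s * π / 2) * I) := by
  rw [cpow_def_of_ne_zero I_ne_zero, log_I]
  push_cast
  ring_nf

lemma re_mul_conj_ofReal_mul (w z : ℂ) (r : ℝ) :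
    (w * conj (r * z)).re = r * (w * conj z).re := by
  rw [map_mul, conj_ofReal, mul_left_comm, re_ofReal_mul]

lemma re_I_cpow_mul_conj_I_mul_ofReal_cpow {ω : ℝ} (hω : 0 < ω) (p s : ℝ) :
    (I ^ (p : ℂ) * conj ((I * ω) ^ (s : ℂ))).re = ω ^ s * Real.cos ((p - s) * π / 2) := by
  rw [mul_ofReal_cpow hω I_ne_zero, ← ofReal_cpow hω.le, mul_comm (I ^ (s : ℂ)), re_mul_conj_ofReal_mul, I_cpow_ofReal,
    I_cpow_ofReal, ← exp_conj, map_mul, conj_ofReal, conj_I, ← exp_add]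
  congr 1
  rw [show ↑(p * π / 2) * I + ↑(s * π / 2) * -I = ↑((p - s) * π / 2) * I by push_cast; ring,
    exp_ofReal_mul_I_re]

end Complex

lemma Real.sin_mul_pi_div_two_pos {q : ℝ} (h0 : 0 < q) (h2 : q < 2) : 0 < Real.sin (q * π / 2) :=
  Real.sin_pos_of_pos_of_lt_pi (by positivity) (by nlinarith [Real.pi_pos])

theorem stmt14_general (q1 q2 c ω : ℝ) (h1 : 0 < q1) (h2 : q1 < q2) (h3 : q2 < 1)
    (hc : 0 < c) (hω : 0 < ω)
    (ρ1 ρ2 b astar : ℝ)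
    (hρ1 : ρ1 = Real.sin (q1 * π / 2) / Real.sin ((q2 - q1) * π / 2))
    (hρ2 : ρ2 = Real.sin (q2 * π / 2) / Real.sin ((q2 - q1) * π / 2))
    (hb : b = ρ1 * ω ^ q2 - c * ρ2 * ω ^ (-q1))
    (P : ℂ)
    (hP : P = ((q1 : ℂ) + q2) * (Complex.I * ω) ^ ((q1 : ℂ) + q2 - 1)
        + (astar : ℂ) * q2 * (Complex.I * ω) ^ ((q2 : ℂ) - 1)
        + (b : ℂ) * q1 * (Complex.I * ω) ^ ((q1 : ℂ) - 1)) :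
    (Complex.I ^ (q2 : ℂ) * (starRingEnd ℂ) P).re
        = ω ^ (q1 - 1) * Real.sin ((q2 - q1) * π / 2) * (q2 * ρ1 * ω ^ q2 + c * q1 * ρ2 * ω ^ (-q1))
      ∧ 0 < (Complex.I ^ (q2 : ℂ) * (starRingEnd ℂ) P).re := by
  have hP' : P = ↑(q1 + q2) * (I * ω) ^ ((q1 + q2 - 1 : ℝ) : ℂ)
      + ↑(astar * q2) * (I * ω) ^ ((q2 - 1 : ℝ) : ℂ) + ↑(b * q1) * (I * ω) ^ ((q1 - 1 : ℝ) : ℂ) := by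
    rw [hP]; push_cast; ring
  have hS := Real.sin_mul_pi_div_two_pos (sub_pos.2 h2) (by linarith)
  have hre : (I ^ (q2 : ℂ) * conj P).re
      = (q1 + q2) * ω ^ (q1 + q2 - 1) * Real.sin (q1 * π / 2)
        - b * q1 * ω ^ (q1 - 1) * Real.sin ((q2 - q1) * π / 2) := by
    simp only [hP', map_add, mul_add, add_re, re_mul_conj_ofReal_mul,
      re_I_cpow_mul_conj_I_mul_ofReal_cpow hω]
    rw [show (q2 - (q1 + q2 - 1)) * π / 2 = π / 2 - q1 * π / 2 by ring,
      show (q2 - (q2 - 1)) * π / 2 = π / 2 by ring,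
      show (q2 - (q1 - 1)) * π / 2 = (q2 - q1) * π / 2 + π / 2 by ring,
      Real.cos_pi_div_two_sub, Real.cos_pi_div_two, Real.cos_add_pi_div_two]
    ring
  have hsin1 : Real.sin (q1 * π / 2) = ρ1 * Real.sin ((q2 - q1) * π / 2) := by
    rw [hρ1, div_mul_cancel₀ _ hS.ne']
  have hsplit : ω ^ (q1 + q2 - 1) = ω ^ (q1 - 1) * ω ^ q2 := by
    rw [← Real.rpow_add hω]; ring_nf
  have key : (I ^ (q2 : ℂ) * conj P).re
      = ω ^ (q1 - 1) * Real.sin ((q2 - q1) * π / 2) *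
          (q2 * ρ1 * ω ^ q2 + c * q1 * ρ2 * ω ^ (-q1)) := by
    rw [hre, hsin1, hb, hsplit]; ring
  have hρ1 : 0 < ρ1 := hρ1 ▸ div_pos (Real.sin_mul_pi_div_two_pos h1 (by linarith)) hS
  have hρ2 : 0 < ρ2 := hρ2 ▸ div_pos (Real.sin_mul_pi_div_two_pos (h1.trans h2) (by linarith)) hS
  refine ⟨key, key ▸ ?_⟩
  have := h1.trans h2
  positivity

theorem stmt14 (q1 q2 c ω : ℝ) (h1 : 0 < q1) (h2 : q1 < q2) (h3 : q2 < 1)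
    (hc : 0 < c) (hω : 0 < ω)
    (ρ1 ρ2 b astar : ℝ)
    (hρ1 : ρ1 = Real.sin (q1 * π / 2) / Real.sin ((q2 - q1) * π / 2))
    (hρ2 : ρ2 = Real.sin (q2 * π / 2) / Real.sin ((q2 - q1) * π / 2))
    (hb : b = ρ1 * ω ^ q2 - c * ρ2 * ω ^ (-q1))
    (hastar : astar = c * ρ1 * ω ^ (-q2) - ρ2 * ω ^ q1)
    (P : ℂ)
    (hP : P = ((q1 : ℂ) + q2) * (Complex.I * ω) ^ ((q1 : ℂ) + q2 - 1)
        + (astar : ℂ) * q2 * (Complex.I * ω) ^ ((q2 : ℂ) - 1)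
        + (b : ℂ) * q1 * (Complex.I * ω) ^ ((q1 : ℂ) - 1)) :
    (Complex.I ^ (q2 : ℂ) * (starRingEnd ℂ) P).re
        = ω ^ (q1 - 1) * Real.sin ((q2 - q1) * π / 2) * (q2 * ρ1 * ω ^ q2 + c * q1 * ρ2 * ω ^ (-q1))
      ∧ 0 < (Complex.I ^ (q2 : ℂ) * (starRingEnd ℂ) P).re :=
  stmt14_general q1 q2 c ω h1 h2 h3 hc hω ρ1 ρ2 b astar hρ1 hρ2 hb P hP
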